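/- Suppose x' (t) = Y(x(t))θ + f₀(x(t)) + g(x(t))u(t), and Y, f₀ are Lipschitz on a compact set C containing the trajectories x(τ) and x̂(τ) for τ ∈ [t−T, t], with ‖u(τ)‖ ≤ ū and ‖θ‖ ≤ θ̄, and g Lipschitz on C. Define Ŷ(t) := ∫_{t−T}^t Y(x̂(τ))dτ and Ĝ(t) := ∫_{t−T}^t (f₀(x̂(τ)) + g(x̂(τ))u(τ))dτ. Then there exists a constant L ≥ 0 (depending only on the Lipschitz constants, T, θ̄, ū) such that ‖x̂(t) − x̂(t−T) − Ŷ(t)θ − Ĝ(t)‖ ≤ L · sup_{σ∈[t−T,t]} ‖x̃(σ)‖, where x̃ = x − x̂. -/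

import Mathlib

/-! Integrating the ODE gives `x t - x (t - T) = ∫ F τ (x τ)` for the control-affine field
`F τ z = Y z θ + f₀ z + g z u τ`, so the residual of `x̂` is
`(x̂ - x) t - (x̂ - x) (t - T) + ∫ (F τ (x τ) - F τ (x̂ τ))`. On `C` the field is Lipschitz in `z`,
uniformly in `τ`, with constant `K = p θ̄ L_Y + L_f + m ū L_g` (a product `A *ᵥ v` costs a factor
of the number of columns for the entrywise sup norm), hence the residual is at most
`(2 + T K) · sup ‖x - x̂‖`. -/

open Matrix MeasureTheory Set
open scoped NNReal

attribute [local instance] Matrix.normedAddCommGroup Matrix.normedSpace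

namespace Matrix

variable {l m α : Type*} [Fintype l] [Fintype m]

theorem norm_mulVec_le_card_mul [NormedRing α] (A : Matrix l m α) (v : m → α) :
    ‖A *ᵥ v‖ ≤ Fintype.card m * ‖A‖ * ‖v‖ := by
  refine (pi_norm_le_iff_of_nonneg (by positivity)).2 fun i => ?_
  calc ‖(A *ᵥ v) i‖ ≤ ∑ j, ‖A i j * v j‖ := norm_sum_le _ _
    _ ≤ ∑ _j : m, ‖A‖ * ‖v‖ := Finset.sum_le_sum fun j _ =>
        (norm_mul_le _ _).trans <| mul_le_mul A.norm_entry_le_entrywise_sup_norm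
          (norm_le_pi_norm v j) (norm_nonneg _) (norm_nonneg _)
    _ = Fintype.card m * ‖A‖ * ‖v‖ := by simp [mul_assoc]

theorem lipschitzWith_mulVec_const [NormedRing α] (v : m → α) :
    LipschitzWith (Fintype.card m * ‖v‖₊) (fun A : Matrix l m α => A *ᵥ v) :=
  LipschitzWith.of_dist_le_mul fun A B => by
    simpa [dist_eq_norm, ← sub_mulVec, mul_right_comm] using norm_mulVec_le_card_mul (A - B) v

theorem of_integral_mulVec {X : Type*} [MeasurableSpace X] {μ : Measure X}
    {A : X → Matrix l m ℝ} (hA : ∀ i j, Integrable (fun x => A x i j) μ) (v : m → ℝ) :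
    (Matrix.of fun i j => ∫ x, A x i j ∂μ) *ᵥ v = ∫ x, A x *ᵥ v ∂μ := by
  have hAv : ∀ i, Integrable (fun x => (A x *ᵥ v) i) μ := fun i =>
    integrable_finsetSum _ fun j _ => (hA i j).mul_const (v j)
  ext i
  simp only [eval_integral hAv, mulVec, dotProduct, of_apply, ← integral_mul_const]
  exact (integral_finsetSum _ fun j _ => (hA i j).mul_const (v j)).symm

theorem of_intervalIntegral_mulVec {a b : ℝ} (hab : a ≤ b) {A : ℝ → Matrix l m ℝ}
    (hA : ∀ i j, IntervalIntegrable (fun τ => A τ i j) volume a b) (v : m → ℝ) :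
    (Matrix.of fun i j => ∫ τ in a..b, A τ i j) *ᵥ v = ∫ τ in a..b, A τ *ᵥ v := by
  simp only [intervalIntegral.integral_of_le hab]
  exact of_integral_mulVec (fun i j => (hA i j).1) v

end Matrix

theorem ContinuousOn.intervalIntegrable_mulVec {l m : Type*} [Fintype l] [Fintype m] {a b : ℝ}
    (hab : a ≤ b) {G : ℝ → Matrix l m ℝ}
    (hG : ContinuousOn G (Icc a b)) {u : ℝ → m → ℝ} (hu : Measurable u) {M : ℝ}
    (hub : ∀ τ ∈ Icc a b, ‖u τ‖ ≤ M) :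
    IntervalIntegrable (fun τ => G τ *ᵥ u τ) volume a b := by
  obtain ⟨MG, hMG⟩ := isCompact_Icc.exists_bound_of_continuousOn hG
  rw [intervalIntegrable_iff_integrableOn_Icc_of_le hab]
  -- The product topology on matrices is not syntactically the one of the entrywise norm.
  have : TopologicalSpace.PseudoMetrizableSpace (Matrix l m ℝ) :=
    inferInstanceAs (TopologicalSpace.PseudoMetrizableSpace (l → m → ℝ))
  have hGm : AEStronglyMeasurable G (volume.restrict (Icc a b)) :=
    hG.aestronglyMeasurable measurableSet_Icc
  refine .of_bound measure_Icc_lt_top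
    ((continuous_fst.matrix_mulVec continuous_snd).comp_aestronglyMeasurable
      (hGm.prodMk hu.aestronglyMeasurable)) (Fintype.card m * MG * M)
    ((ae_restrict_iff' measurableSet_Icc).2 (.of_forall fun τ hτ => ?_))
  calc ‖G τ *ᵥ u τ‖ ≤ Fintype.card m * ‖G τ‖ * ‖u τ‖ := norm_mulVec_le_card_mul _ _
    _ ≤ Fintype.card m * MG * M := by
      have hMG0 : 0 ≤ MG := (norm_nonneg _).trans (hMG τ hτ)
      gcongr
      exacts [hMG τ hτ, hub τ hτ]

theorem norm_sub_sub_integral_le_of_hasDerivAt {E : Type*} [NormedAddCommGroup E]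
    [NormedSpace ℝ E] [CompleteSpace E] {F : ℝ → E → E} {C : Set E} {K : ℝ≥0} {x y : ℝ → E}
    {a b S : ℝ} (hab : a ≤ b) (hF : ∀ τ ∈ Icc a b, LipschitzOnWith K (F τ) C)
    (hx : ∀ τ ∈ Icc a b, HasDerivAt x (F τ (x τ)) τ)
    (hxC : MapsTo x (Icc a b) C) (hyC : MapsTo y (Icc a b) C)
    (hFx : IntervalIntegrable (fun τ => F τ (x τ)) volume a b)
    (hFy : IntervalIntegrable (fun τ => F τ (y τ)) volume a b)
    (hS : ∀ σ ∈ Icc a b, ‖x σ - y σ‖ ≤ S) :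
    ‖y b - y a - ∫ τ in a..b, F τ (y τ)‖ ≤ (2 + (b - a) * K) * S := by
  have hIcc := uIcc_of_le hab
  have hFTC : ∫ τ in a..b, F τ (x τ) = x b - x a :=
    intervalIntegral.integral_eq_sub_of_hasDerivAt (fun τ hτ => hx τ (hIcc ▸ hτ)) hFx
  have hresidual : y b - y a - ∫ τ in a..b, F τ (y τ)
      = (y b - x b) - (y a - x a) + ∫ τ in a..b, (F τ (x τ) - F τ (y τ)) := by
    rw [intervalIntegral.integral_sub hFx hFy, hFTC]; abel
  have hdefect : ‖∫ τ in a..b, (F τ (x τ) - F τ (y τ))‖ ≤ K * S * |b - a| :=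
    intervalIntegral.norm_integral_le_of_norm_le_const fun τ hτ =>
      have hτ' := Ioc_subset_Icc_self (uIoc_of_le hab ▸ hτ)
      (hF τ hτ').norm_sub_le_of_le (hxC hτ') (hyC hτ') (hS τ hτ')
  have hb := right_mem_Icc.2 hab
  have ha := left_mem_Icc.2 hab
  rw [abs_of_nonneg (sub_nonneg.2 hab)] at hdefect
  rw [hresidual]
  calc _ ≤ ‖y b - x b‖ + ‖y a - x a‖ + ‖∫ τ in a..b, (F τ (x τ) - F τ (y τ))‖ :=
        (norm_add_le _ _).trans (add_le_add_left (norm_sub_le _ _) _)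
    _ ≤ S + S + K * S * (b - a) := by
        gcongr
        exacts [norm_sub_rev (x b) _ ▸ hS b hb, norm_sub_rev (x a) _ ▸ hS a ha]
    _ = (2 + (b - a) * K) * S := by ring

section ControlAffine

variable {n p m : ℕ} (Y : (Fin n → ℝ) → Matrix (Fin n) (Fin p) ℝ)
  (f0 : (Fin n → ℝ) → (Fin n → ℝ)) (g : (Fin n → ℝ) → Matrix (Fin n) (Fin m) ℝ)
  (θ : Fin p → ℝ) (u : ℝ → Fin m → ℝ)

def controlAffineField (τ : ℝ) (z : Fin n → ℝ) : Fin n → ℝ :=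
  Y z *ᵥ θ + f0 z + g z *ᵥ u τ

variable {Y f0 g θ u}

theorem lipschitzOnWith_controlAffineField {C : Set (Fin n → ℝ)} {LY Lf Lg : ℝ≥0}
    (hY : LipschitzOnWith LY Y C) (hf : LipschitzOnWith Lf f0 C) (hg : LipschitzOnWith Lg g C)
    {θbar ubar : ℝ} (hθ : ‖θ‖ ≤ θbar) {τ : ℝ} (hu : ‖u τ‖ ≤ ubar) :
    LipschitzOnWith (p * θbar.toNNReal * LY + Lf + m * ubar.toNNReal * Lg)
      (controlAffineField Y f0 g θ u τ) C := by
  have hθ' : ‖θ‖₊ ≤ θbar.toNNReal := NNReal.le_toNNReal_of_coe_le hθ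
  have hu' : ‖u τ‖₊ ≤ ubar.toNNReal := NNReal.le_toNNReal_of_coe_le hu
  refine ((((lipschitzWith_mulVec_const θ).comp_lipschitzOnWith hY).add hf).add
    ((lipschitzWith_mulVec_const (u τ)).comp_lipschitzOnWith hg)).weaken ?_
  simp only [Fintype.card_fin]
  gcongr

theorem intervalIntegrable_and_integral_controlAffineField {C : Set (Fin n → ℝ)}
    (hY : ContinuousOn Y C) (hf : ContinuousOn f0 C) (hg : ContinuousOn g C) {a b ubar : ℝ}
    (hab : a ≤ b) (hu : Measurable u) (hub : ∀ τ ∈ Icc a b, ‖u τ‖ ≤ ubar)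
    {z : ℝ → Fin n → ℝ} (hz : ContinuousOn z (Icc a b)) (hzC : MapsTo z (Icc a b) C) :
    IntervalIntegrable (fun τ => controlAffineField Y f0 g θ u τ (z τ)) volume a b ∧
      ∫ τ in a..b, controlAffineField Y f0 g θ u τ (z τ) =
        (Matrix.of fun i j => ∫ τ in a..b, Y (z τ) i j) *ᵥ θ
          + ∫ τ in a..b, (f0 (z τ) + g (z τ) *ᵥ u τ) := by
  have hYz : ContinuousOn (fun τ => Y (z τ)) (uIcc a b) := uIcc_of_le hab ▸ hY.comp hz hzC
  have hreg : IntervalIntegrable (fun τ => Y (z τ) *ᵥ θ) volume a b :=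
    ((continuous_id.matrix_mulVec continuous_const).comp_continuousOn hYz).intervalIntegrable
  have hdrift : IntervalIntegrable (fun τ => f0 (z τ) + g (z τ) *ᵥ u τ) volume a b :=
    (ContinuousOn.intervalIntegrable (uIcc_of_le hab ▸ hf.comp hz hzC)).add
      ((hg.comp hz hzC).intervalIntegrable_mulVec hab hu hub)
  refine ⟨by simpa only [controlAffineField, add_assoc] using hreg.add hdrift, ?_⟩
  rw [Matrix.of_intervalIntegral_mulVec (A := fun τ => Y (z τ)) hab fun i j =>
      ((continuous_apply_apply i j).comp_continuousOn hYz).intervalIntegrable,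
    ← intervalIntegral.integral_add hreg hdrift]
  simp only [controlAffineField, add_assoc]

end ControlAffine

theorem bddAbove_norm_sub_image {α E : Type*} [SeminormedAddCommGroup E] {C : Set E}
    (hC : Bornology.IsBounded C) {x y : α → E} {s : Set α} (hx : MapsTo x s C)
    (hy : MapsTo y s C) : BddAbove ((fun σ => ‖x σ - y σ‖) '' s) :=
  ⟨Metric.diam C, by
    rintro _ ⟨σ, hσ, rfl⟩
    exact (dist_eq_norm (x σ) (y σ)).ge.trans <| Metric.dist_le_diam_of_mem hC (hx hσ) (hy hσ)⟩

theorem stmt_10_general {n p m : ℕ} (C : Set (Fin n → ℝ)) (hCcomp : IsCompact C)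
    (Y : (Fin n → ℝ) → Matrix (Fin n) (Fin p) ℝ)
    (f0 : (Fin n → ℝ) → (Fin n → ℝ))
    (g : (Fin n → ℝ) → Matrix (Fin n) (Fin m) ℝ)
    (LY Lf Lg : NNReal)
    (hY : LipschitzOnWith LY Y C) (hf : LipschitzOnWith Lf f0 C)
    (hg : LipschitzOnWith Lg g C)
    (T θbar ubar : ℝ) (hT : 0 ≤ T) :
    ∃ L : ℝ, 0 ≤ L ∧
      ∀ (x xhat : ℝ → Fin n → ℝ) (u : ℝ → Fin m → ℝ) (θ : Fin p → ℝ) (t : ℝ),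
        ‖θ‖ ≤ θbar →
        Measurable u →
        (∀ τ ∈ Set.Icc (t - T) t, ‖u τ‖ ≤ ubar) →
        Continuous xhat →
        (∀ τ ∈ Set.Icc (t - T) t, x τ ∈ C ∧ xhat τ ∈ C) →
        (∀ τ ∈ Set.Icc (t - T) t,
          HasDerivAt x (Y (x τ) *ᵥ θ + f0 (x τ) + g (x τ) *ᵥ u τ) τ) →
        ‖xhat t - xhat (t - T)
            - ((Matrix.of fun i j => ∫ τ in (t - T)..t, Y (xhat τ) i j) *ᵥ θ)
            - ∫ τ in (t - T)..t, (f0 (xhat τ) + g (xhat τ) *ᵥ u τ)‖ ≤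
          L * sSup ((fun σ => ‖x σ - xhat σ‖) '' Set.Icc (t - T) t) := by
  refine ⟨2 + T * ↑(p * θbar.toNNReal * LY + Lf + m * ubar.toNNReal * Lg), by positivity, ?_⟩
  intro x xhat u θ t hθ hu hub hxhat hmem hx
  have hab : t - T ≤ t := sub_le_self t hT
  have hxC : MapsTo x (Icc (t - T) t) C := fun τ hτ => (hmem τ hτ).1
  have hxhatC : MapsTo xhat (Icc (t - T) t) C := fun τ hτ => (hmem τ hτ).2
  have hx' := intervalIntegrable_and_integral_controlAffineField (θ := θ)
    hY.continuousOn hf.continuousOn hg.continuousOn hab hu hub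
    (fun τ hτ => (hx τ hτ).continuousAt.continuousWithinAt) hxC
  have hxhat' := intervalIntegrable_and_integral_controlAffineField (θ := θ)
    hY.continuousOn hf.continuousOn hg.continuousOn hab hu hub hxhat.continuousOn hxhatC
  have hres := norm_sub_sub_integral_le_of_hasDerivAt hab
    (fun τ hτ => lipschitzOnWith_controlAffineField hY hf hg hθ (hub τ hτ)) hx hxC hxhatC
    hx'.1 hxhat'.1
    (fun σ hσ => le_csSup (bddAbove_norm_sub_image hCcomp.isBounded hxC hxhatC) ⟨σ, hσ, rfl⟩)
  rwa [sub_sub_cancel, hxhat'.2, ← sub_sub] at hres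

/-- Lemma 1 of the paper: the residual in the integrated regressor relation is
`O(sup_{σ∈[t−T,t]} ‖x̃(σ)‖)`, with a constant depending only on the Lipschitz
constants, the window length `T`, and the bounds `θ̄`, `ū`. -/
theorem stmt_10 {n p m : ℕ} (C : Set (Fin n → ℝ)) (hCcomp : IsCompact C)
    (Y : (Fin n → ℝ) → Matrix (Fin n) (Fin p) ℝ)
    (f0 : (Fin n → ℝ) → (Fin n → ℝ))
    (g : (Fin n → ℝ) → Matrix (Fin n) (Fin m) ℝ)
    (LY Lf Lg : NNReal)
    (hY : LipschitzOnWith LY Y C) (hf : LipschitzOnWith Lf f0 C)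
    (hg : LipschitzOnWith Lg g C)
    (T θbar ubar : ℝ) (hT : 0 ≤ T) (hθbar : 0 ≤ θbar) (hubar : 0 ≤ ubar) :
    ∃ L : ℝ, 0 ≤ L ∧
      ∀ (x xhat : ℝ → Fin n → ℝ) (u : ℝ → Fin m → ℝ) (θ : Fin p → ℝ) (t : ℝ),
        ‖θ‖ ≤ θbar →
        Measurable u →
        (∀ τ ∈ Set.Icc (t - T) t, ‖u τ‖ ≤ ubar) →
        Continuous xhat →
        (∀ τ ∈ Set.Icc (t - T) t, x τ ∈ C ∧ xhat τ ∈ C) →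
        (∀ τ ∈ Set.Icc (t - T) t,
          HasDerivAt x (Y (x τ) *ᵥ θ + f0 (x τ) + g (x τ) *ᵥ u τ) τ) →
        ‖xhat t - xhat (t - T)
            - ((Matrix.of fun i j => ∫ τ in (t - T)..t, Y (xhat τ) i j) *ᵥ θ)
            - ∫ τ in (t - T)..t, (f0 (xhat τ) + g (xhat τ) *ᵥ u τ)‖ ≤
          L * sSup ((fun σ => ‖x σ - xhat σ‖) '' Set.Icc (t - T) t) :=
  stmt_10_general C hCcomp Y f0 g LY Lf Lg hY hf hg T θbar ubar hT
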